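/- arXiv:1904.11668 — 3 statements merged into one kernel-verified Lean document; each statement's English description precedes it below -/
import Mathlib

section
/- Let (M, 𝒜) be an uncertainty matroid on a finite ground set E, let T₁ and T₂ be uniformly optimal bases of (M, 𝒜), and let e ∈ T₁ \ T₂. Then: (i) e is certain; and (ii) there exists f ∈ T₂ \ T₁ such that both T₁ − e + f and T₂ − f + e are uniformly optimal bases of (M, 𝒜). -/
open Matroid

variable {α : Type*}

/-- `A` is an uncertainty area function for `M`: each element of the ground set gets a
nonempty bounded set of reals. -/
def IsAreaFun (M : Matroid α) (A : α → Set ℝ) : Prop :=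
  ∀ e ∈ M.E, (A e).Nonempty ∧ BddBelow (A e) ∧ BddAbove (A e)

/-- A realization: a weight function with `w e ∈ A e` for every element of the ground set. -/
def Realization (M : Matroid α) (A : α → Set ℝ) (w : α → ℝ) : Prop :=
  ∀ e ∈ M.E, w e ∈ A e

/-- The total `w`-weight of a set. -/
noncomputable def setWeight (w : α → ℝ) (T : Set α) : ℝ := ∑ᶠ e ∈ T, w e

/-- A `w`-basis: a basis of `M` of minimum total `w`-weight. -/
def IsMinBasis (M : Matroid α) (w : α → ℝ) (T : Set α) : Prop :=
  M.IsBase T ∧ ∀ B, M.IsBase B → setWeight w T ≤ setWeight w B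

/-- A uniformly optimal basis (an `A`-basis): a `w`-basis for every realization `w`. -/
def IsUOB (M : Matroid α) (A : α → Set ℝ) (T : Set α) : Prop :=
  ∀ w, Realization M A w → IsMinBasis M w T

/-- An element is certain if its area is a singleton. -/
def Certain (A : α → Set ℝ) (e : α) : Prop := ∃ r : ℝ, A e = {r}

/-- `e` is blue if every realization admits a minimum weight basis containing `e`. -/
def Blue (M : Matroid α) (A : α → Set ℝ) (e : α) : Prop :=
  ∀ w, Realization M A w → ∃ T, IsMinBasis M w T ∧ e ∈ T

/-- `e` is red if every realization admits a minimum weight basis avoiding `e`. -/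
def Red (M : Matroid α) (A : α → Set ℝ) (e : α) : Prop :=
  ∀ w, Realization M A w → ∃ T, IsMinBasis M w T ∧ e ∉ T

/-- `e` is colored if it is blue or red. -/
def Colored (M : Matroid α) (A : α → Set ℝ) (e : α) : Prop :=
  Blue M A e ∨ Red M A e

/-!
By strong basis exchange there is `f ∈ T₂ \ T₁` such that `T₁ - e + f` and `T₂ - f + e` are both
bases. Minimality of `T₁` and of `T₂` under a realization `w` then gives `w e ≤ w f` and
`w f ≤ w e`, so every realization gives `e` and `f` the same weight. Hence both exchanged bases
have the weight of the original ones under every realization, and, since `w e` may be varied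
within `A e` while `w f` stays fixed, `A e` is a singleton.
-/

open Set

/-- The fundamental circuit of `e` for `B₂` and its fundamental cocircuit for `B₁` share `e`;
since a circuit and a cocircuit never meet in a single element, they share some `f ≠ e`, and
such an `f` can be swapped for `e` both ways. -/
theorem Matroid.IsBase.strong_exchange {M : Matroid α} {B₁ B₂ : Set α} {e : α}
    (hB₁ : M.IsBase B₁) (hB₂ : M.IsBase B₂) (he : e ∈ B₁ \ B₂) :
    ∃ f ∈ B₂ \ B₁, M.IsBase (insert f (B₁ \ {e})) ∧ M.IsBase (insert e (B₂ \ {f})) := by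
  have heE : e ∈ M.E := hB₁.subset_ground he.1
  have hC := hB₂.fundCircuit_isCircuit heE he.2
  have hK := fundCocircuit_isCocircuit he.1 hB₁
  obtain ⟨f, ⟨hfC, hfK⟩, hfe⟩ := (hC.isCocircuit_inter_nontrivial hK
    ⟨e, mem_fundCircuit .., mem_fundCocircuit ..⟩).exists_ne e
  have hfB₂ : f ∈ B₂ := (fundCircuit_subset_insert _ _ _ hfC).resolve_left hfe
  have hfB₁ : f ∉ B₁ := ((fundCocircuit_subset_insert_compl _ _ _ hfK).resolve_left hfe).2
  refine ⟨f, ⟨hfB₂, hfB₁⟩, hB₁.exchange_isBase_of_indep hfB₁ ?_,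
    hB₂.exchange_isBase_of_indep he.2 ?_⟩
  · have hfcl : f ∈ M.closure B₁ := hB₁.closure_eq ▸ hB₂.subset_ground hfB₂
    rw [insert_sdiff_singleton_comm hfe, ← hB₁.indep.mem_fundCircuit_iff hfcl hfB₁,
      ← hB₁.mem_fundCocircuit_iff_mem_fundCircuit]
    exact hfK
  · have hecl : e ∈ M.closure B₂ := hB₂.closure_eq ▸ heE
    rw [insert_sdiff_singleton_comm hfe.symm, ← hB₂.indep.mem_fundCircuit_iff hecl he.2]
    exact hfC

theorem setWeight_exchange (w : α → ℝ) {T : Set α} (hT : T.Finite) {e f : α} (he : e ∈ T)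
    (hf : f ∉ T) : setWeight w (insert f (T \ {e})) = setWeight w T + w f - w e := by
  have hT_eq : setWeight w T = w e + setWeight w (T \ {e}) := by
    conv_lhs => rw [← insert_eq_of_mem he, ← insert_sdiff_singleton]
    exact finsum_mem_insert w (fun h ↦ h.2 rfl) hT.sdiff
  rw [setWeight, finsum_mem_insert w (fun h ↦ hf h.1) hT.sdiff, ← setWeight, hT_eq]
  ring

section IsMinBasis

variable {M : Matroid α} {w : α → ℝ} {T : Set α} {e f : α}

theorem IsMinBasis.le_of_exchange (hT : IsMinBasis M w T) (hfin : T.Finite) (he : e ∈ T)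
    (hf : f ∉ T) (hB : M.IsBase (insert f (T \ {e}))) : w e ≤ w f := by
  have := hT.2 _ hB
  rw [setWeight_exchange w hfin he hf] at this
  linarith

theorem IsMinBasis.exchange (hT : IsMinBasis M w T) (hfin : T.Finite) (he : e ∈ T)
    (hf : f ∉ T) (hB : M.IsBase (insert f (T \ {e}))) (hfe : w f ≤ w e) :
    IsMinBasis M w (insert f (T \ {e})) := by
  refine ⟨hB, fun B hB' ↦ ?_⟩
  rw [setWeight_exchange w hfin he hf]
  linarith [hT.2 B hB']

end IsMinBasis

theorem IsAreaFun.exists_realization {M : Matroid α} {A : α → Set ℝ} (hA : IsAreaFun M A) :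
    ∃ w, Realization M A w := by
  classical
  exact ⟨fun x ↦ if h : (A x).Nonempty then h.some else 0,
    fun x hx ↦ by simpa [(hA x hx).1] using (hA x hx).1.some_mem⟩

theorem Realization.update [DecidableEq α] {M : Matroid α} {A : α → Set ℝ} {w : α → ℝ} (hw : Realization M A w)
    {e : α} {r : ℝ} (hr : r ∈ A e) : Realization M A (Function.update w e r) := by
  intro x hx
  rcases eq_or_ne x e with rfl | hne
  · simpa using hr
  · simpa [Function.update_of_ne hne] using hw x hx

theorem IsAreaFun.certain_of_forall_realization_eq {M : Matroid α} {A : α → Set ℝ}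
    (hA : IsAreaFun M A) {e f : α} (he : e ∈ M.E) (hfe : f ≠ e)
    (hef : ∀ w, Realization M A w → w e = w f) : Certain A e := by
  classical
  obtain ⟨w₀, hw₀⟩ := hA.exists_realization
  refine ⟨w₀ f, eq_singleton_iff_nonempty_unique_mem.2 ⟨(hA e he).1, fun r hr ↦ ?_⟩⟩
  simpa [Function.update_of_ne hfe] using hef _ (hw₀.update hr)

/-- Strong basis exchange for uniformly optimal bases; exchanged elements are certain. -/
theorem uob_exchange (M : Matroid α) (A : α → Set ℝ)
    (hE : M.E.Finite) (hA : IsAreaFun M A)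
    (T₁ T₂ : Set α) (h₁ : IsUOB M A T₁) (h₂ : IsUOB M A T₂)
    (e : α) (he : e ∈ T₁ \ T₂) :
    Certain A e ∧ ∃ f ∈ T₂ \ T₁,
      IsUOB M A (insert f (T₁ \ {e})) ∧ IsUOB M A (insert e (T₂ \ {f})) := by
  obtain ⟨w₀, hw₀⟩ := hA.exists_realization
  have hT₁ := (h₁ w₀ hw₀).1
  have hT₂ := (h₂ w₀ hw₀).1
  have hfin₁ : T₁.Finite := hE.subset hT₁.subset_ground
  have hfin₂ : T₂.Finite := hE.subset hT₂.subset_ground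
  obtain ⟨f, hf, hB₁, hB₂⟩ := hT₁.strong_exchange hT₂ he
  have hef : ∀ w, Realization M A w → w e = w f := fun w hw ↦
    le_antisymm ((h₁ w hw).le_of_exchange hfin₁ he.1 hf.2 hB₁)
      ((h₂ w hw).le_of_exchange hfin₂ hf.1 he.2 hB₂)
  refine ⟨hA.certain_of_forall_realization_eq (hT₁.subset_ground he.1)
      (ne_of_mem_of_not_mem hf.1 he.2) hef, f, hf, fun w hw ↦ ?_, fun w hw ↦ ?_⟩
  · exact (h₁ w hw).exchange hfin₁ he.1 hf.2 hB₁ (hef w hw).ge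
  · exact (h₂ w hw).exchange hfin₂ hf.1 he.2 hB₂ (hef w hw).le
end

section
/- Let (M, 𝒜) be an uncertainty matroid on a finite ground set E. For e ∈ E let F(e) = {f ∈ E − e : L_f < U_e} and F*(e) = {f ∈ E − e : L_e < U_f}. Then: (i) e is blue if and only if e ∉ span(F(e)); and (ii) e is red if and only if e ∉ cospan(F*(e)). -/
open Matroid

variable {α : Type*}

open Set

/-!
For a fixed weight `w`, the element `e` lies in some minimum-weight basis iff
`e ∉ span {f | w f < w e}`: one direction is the basis exchange `B - e + f` for an `f` outside
`span (B - e)`, the other exchanges `e` into a minimum basis along its fundamental circuit.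
Over all realizations the sets `{f | w f < w e}` stay inside `F(e)`, and since `E` is finite a
single realization attains all of `F(e)`: pick `w e ∈ 𝒜(e)` above every `L_f` with `f ∈ F(e)`
and `w f ∈ 𝒜(f)` below `w e`. Red elements of `(M, 𝒜)` are the blue elements of `(M*, -𝒜)`,
because complements of minimum bases of `M` are the minimum bases of `M*` for the negated
weights.
-/

lemma Set.Finite.exists_mem_forall_lt_of_lt_csSup {β ι : Type*}
    [ConditionallyCompleteLinearOrder β] {S : Set β} (hS : S.Nonempty) {F : Set ι}
    (hF : F.Finite) {g : ι → β} (hg : ∀ i ∈ F, g i < sSup S) :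
    ∃ t ∈ S, ∀ i ∈ F, g i < t := by
  obtain rfl | hFne := F.eq_empty_or_nonempty
  · obtain ⟨t, ht⟩ := hS
    exact ⟨t, ht, by simp⟩
  obtain ⟨i₀, hi₀, hmax⟩ := Set.exists_max_image F g hF hFne
  obtain ⟨t, ht, hlt⟩ := exists_lt_of_lt_csSup hS (hg i₀ hi₀)
  exact ⟨t, ht, fun i hi => (hmax i hi).trans_lt hlt⟩

lemma setWeight_exchange_s7 (w : α → ℝ) {B : Set α} (hB : B.Finite) {x y : α} (hy : y ∈ B)
    (hx : x ∉ B) : setWeight w (insert x (B \ {y})) = setWeight w B - w y + w x := by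
  have hsplit := finsum_mem_add_sdiff (f := w) (singleton_subset_iff.2 hy) hB
  rw [finsum_mem_singleton] at hsplit
  rw [setWeight, setWeight, finsum_mem_insert w (fun h => hx h.1) hB.sdiff]
  linarith

lemma setWeight_neg (w : α → ℝ) {s : Set α} (hs : s.Finite) :
    setWeight (-w) s = -setWeight w s :=
  finsum_mem_neg_distrib w hs

lemma setWeight_add_sdiff (w : α → ℝ) {s t : Set α} (hst : s ⊆ t) (ht : t.Finite) :
    setWeight w s + setWeight w (t \ s) = setWeight w t :=
  finsum_mem_add_sdiff hst ht

section MinBasis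

variable {M : Matroid α} {w : α → ℝ} {B : Set α} {e x y : α}

lemma exists_isMinBasis (hE : M.E.Finite) (w : α → ℝ) : ∃ B, IsMinBasis M w B := by
  have hfin : {B | M.IsBase B}.Finite :=
    hE.finite_subsets.subset fun B hB => hB.subset_ground
  obtain ⟨B, hB, hmin⟩ := exists_min_image _ (setWeight w) hfin M.exists_isBase
  exact ⟨B, hB, hmin⟩

lemma IsMinBasis.le_of_exchange_s7 (hE : M.E.Finite) (hB : IsMinBasis M w B) (hy : y ∈ B)
    (hx : x ∉ B) (hB' : M.IsBase (insert x (B \ {y}))) : w y ≤ w x := by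
  have := hB.2 _ hB'
  rw [setWeight_exchange_s7 w (hE.subset hB.1.subset_ground) hy hx] at this
  linarith

lemma IsMinBasis.exchange_s7 (hE : M.E.Finite) (hB : IsMinBasis M w B) (hy : y ∈ B)
    (hx : x ∉ B) (hB' : M.IsBase (insert x (B \ {y}))) (hxy : w x ≤ w y) :
    IsMinBasis M w (insert x (B \ {y})) := by
  refine ⟨hB', fun C hC => ?_⟩
  rw [setWeight_exchange_s7 w (hE.subset hB.1.subset_ground) hy hx]
  linarith [hB.2 C hC]

lemma IsMinBasis.compl_isMinBasis_dual (hE : M.E.Finite) (hB : IsMinBasis M w B) :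
    IsMinBasis M✶ (-w) (M.E \ B) := by
  refine ⟨hB.1.compl_isBase_dual, fun C hC => ?_⟩
  have hCE : C ⊆ M.E := hC.subset_ground
  have hB_le := hB.2 _ hC.compl_isBase_of_dual
  have hB_split := setWeight_add_sdiff w hB.1.subset_ground hE
  have hC_split := setWeight_add_sdiff w hCE hE
  rw [setWeight_neg w hE.sdiff, setWeight_neg w (hE.subset hCE)]
  linarith

lemma IsMinBasis.notMem_closure_lt (hE : M.E.Finite) (hB : IsMinBasis M w B) (heB : e ∈ B) :
    e ∉ M.closure {f | w f < w e} := by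
  intro hecl
  have hnsub : ¬ {f | w f < w e} ∩ M.E ⊆ M.closure (B \ {e}) := fun hsub =>
    hB.1.indep.notMem_closure_sdiff_of_mem heB <|
      M.closure_subset_closure_of_subset_closure hsub (by rwa [closure_inter_ground])
  obtain ⟨x, ⟨hxw, hxE⟩, hxcl⟩ := not_subset.1 hnsub
  have hxe : x ≠ e := by
    rintro rfl
    exact lt_irrefl (w x) hxw
  have hxB : x ∉ B := fun hxB =>
    hxcl (M.subset_closure _ (sdiff_subset.trans hB.1.subset_ground) ⟨hxB, hxe⟩)
  have := hB.le_of_exchange_s7 hE heB hxB (hB.1.exchange_base_of_notMem_closure heB hxcl)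
  exact this.not_gt hxw

lemma exists_isMinBasis_mem_of_notMem_closure (hE : M.E.Finite) (he : e ∈ M.E)
    (hecl : e ∉ M.closure {f | w f < w e}) : ∃ B, IsMinBasis M w B ∧ e ∈ B := by
  obtain ⟨B, hB⟩ := exists_isMinBasis hE w
  by_cases heB : e ∈ B
  · exact ⟨B, hB, heB⟩
  have hC := hB.1.fundCircuit_isCircuit he heB
  obtain ⟨f, hfC, hfe, hwf⟩ : ∃ f ∈ M.fundCircuit e B, f ≠ e ∧ w e ≤ w f := by
    by_contra! h
    exact hecl <| M.closure_subset_closure (fun f hf => h f hf.1 hf.2)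
      (hC.mem_closure_sdiff_singleton_of_mem (M.mem_fundCircuit e B))
  have hfB : f ∈ B := (M.fundCircuit_subset_insert e B hfC).resolve_left hfe
  have hind : M.Indep (insert e (B \ {f})) := by
    rw [insert_sdiff_singleton_comm hfe.symm]
    exact (hB.1.indep.mem_fundCircuit_iff (by rwa [hB.1.closure_eq]) heB).1 hfC
  exact ⟨_, hB.exchange_s7 hE hfB heB (hB.1.exchange_isBase_of_indep heB hind) hwf, mem_insert _ _⟩

lemma exists_isMinBasis_mem_iff (hE : M.E.Finite) (he : e ∈ M.E) :
    (∃ B, IsMinBasis M w B ∧ e ∈ B) ↔ e ∉ M.closure {f | w f < w e} :=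
  ⟨fun ⟨_, hB, heB⟩ => hB.notMem_closure_lt hE heB,
    exists_isMinBasis_mem_of_notMem_closure hE he⟩

end MinBasis

section Uncertainty

variable {M : Matroid α} {A : α → Set ℝ} {e : α}

lemma IsAreaFun.dual_neg (hA : IsAreaFun M A) : IsAreaFun M✶ (-A) := fun f hf =>
  ⟨(hA f hf).1.neg, bddBelow_neg.2 (hA f hf).2.2, bddAbove_neg.2 (hA f hf).2.1⟩

lemma realization_dual_neg_iff {w : α → ℝ} :
    Realization M✶ (-A) w ↔ Realization M A (-w) :=
  Iff.rfl

lemma exists_realization_lt_of_sInf_lt (hA : IsAreaFun M A) (he : e ∈ M.E) {t : ℝ}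
    (ht : t ∈ A e) :
    ∃ w, Realization M A w ∧ w e = t ∧ ∀ f ∈ M.E, f ≠ e → sInf (A f) < t → w f < t := by
  classical
  have hchoice :
      ∀ f ∈ M.E, ∃ x ∈ A f, (f = e → x = t) ∧ (f ≠ e → sInf (A f) < t → x < t) := by
    intro f hf
    by_cases hfe : f = e
    · subst hfe
      exact ⟨t, ht, fun _ => rfl, fun h => absurd rfl h⟩
    by_cases hlt : sInf (A f) < t
    · obtain ⟨x, hx, hxt⟩ := exists_lt_of_csInf_lt (hA f hf).1 hlt
      exact ⟨x, hx, fun h => absurd h hfe, fun _ _ => hxt⟩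
    · obtain ⟨x, hx⟩ := (hA f hf).1
      exact ⟨x, hx, fun h => absurd h hfe, fun _ h => absurd h hlt⟩
  choose! w hwA hw using hchoice
  exact ⟨w, hwA, (hw e he).1 rfl, fun f hf => (hw f hf).2⟩

theorem blue_iff_notMem_closure (hE : M.E.Finite) (hA : IsAreaFun M A) (he : e ∈ M.E) :
    Blue M A e ↔ e ∉ M.closure {f ∈ M.E | f ≠ e ∧ sInf (A f) < sSup (A e)} := by
  constructor
  · intro hblue hecl
    obtain ⟨t, ht, hFt⟩ := Set.Finite.exists_mem_forall_lt_of_lt_csSup (hA e he).1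
      (F := {f ∈ M.E | f ≠ e ∧ sInf (A f) < sSup (A e)}) (hE.subset (sep_subset _ _))
      (g := fun f => sInf (A f)) fun f hf => hf.2.2
    obtain ⟨w, hw, hwe, hwlt⟩ := exists_realization_lt_of_sInf_lt hA he ht
    refine (exists_isMinBasis_mem_iff hE he).1 (hblue w hw)
      (M.closure_subset_closure (fun f hf => ?_) hecl)
    rw [mem_ofPred_eq, hwe]
    exact hwlt f hf.1 hf.2.1 (hFt f hf)
  · intro hecl w hw
    refine (exists_isMinBasis_mem_iff hE he).2 fun hmem => hecl ?_
    rw [← closure_inter_ground] at hmem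
    refine M.closure_subset_closure ?_ hmem
    rintro f ⟨hwf, hfE⟩
    refine ⟨hfE, ?_, ?_⟩
    · rintro rfl
      exact lt_irrefl (w f) hwf
    calc sInf (A f) ≤ w f := csInf_le (hA f hfE).2.1 (hw f hfE)
      _ < w e := hwf
      _ ≤ sSup (A e) := le_csSup (hA e he).2.2 (hw e he)

theorem red_iff_blue_dual_neg (hE : M.E.Finite) (he : e ∈ M.E) :
    Red M A e ↔ Blue M✶ (-A) e := by
  constructor
  · intro hred w hw
    obtain ⟨B, hB, heB⟩ := hred (-w) hw
    exact ⟨M.E \ B, by simpa using hB.compl_isMinBasis_dual hE, he, heB⟩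
  · intro hblue w hw
    obtain ⟨B, hB, heB⟩ := hblue (-w) (by rwa [realization_dual_neg_iff, neg_neg])
    exact ⟨M.E \ B, by simpa using IsMinBasis.compl_isMinBasis_dual (M := M✶) hE hB,
      fun h => h.2 heB⟩

end Uncertainty

/-- Span/cospan characterization of blue and red elements. -/
theorem blue_red_span_characterization (M : Matroid α) (A : α → Set ℝ)
    (hE : M.E.Finite) (hA : IsAreaFun M A) (e : α) (he : e ∈ M.E) :
    (Blue M A e ↔ e ∉ M.closure {f ∈ M.E | f ≠ e ∧ sInf (A f) < sSup (A e)}) ∧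
    (Red M A e ↔ e ∉ M✶.closure {f ∈ M.E | f ≠ e ∧ sInf (A e) < sSup (A f)}) := by
  refine ⟨blue_iff_notMem_closure hE hA he, ?_⟩
  rw [red_iff_blue_dual_neg hE he, blue_iff_notMem_closure (M := M✶) hE hA.dual_neg he]
  simp only [Pi.neg_apply, Real.sInf_neg, Real.sSup_neg, neg_lt_neg_iff, dual_ground]
end

section
/- Let (M, 𝒜) be an uncertainty matroid on a finite ground set E that admits a uniformly optimal basis. If e ∈ E is blue (resp. red), then there exists a uniformly optimal basis T of (M, 𝒜) with e ∈ T (resp. e ∉ T). -/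
open Matroid

variable {α : Type*}

/-!
Let `T` be uniformly optimal and `e ∉ T` blue. Among the `f ∈ T` that `e` can replace, one has
its whole area above that of `e`: otherwise some realization makes `e` strictly heavier than all
of them, and a symmetric exchange between `T` and a minimum basis through `e` would make that
basis lighter. Replacing this `f` by `e` in `T` gives a uniformly optimal basis, since then
`w e ≤ w f` for every realization `w`. The red case is the mirror image, exchanging `e ∈ T`
for an `f ∉ T`.
-/

open Set

/-- The witness `f` lies in both the fundamental circuit of `e` in `T` and the fundamental
cocircuit of `e` in `B`: a circuit and a cocircuit never meet in exactly one element. -/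
theorem Matroid.IsBase.exists_symm_exchange {M : Matroid α} {T B : Set α} {e : α}
    (hT : M.IsBase T) (hB : M.IsBase B) (heB : e ∈ B) (heT : e ∉ T) :
    ∃ f ∈ T \ B, M.IsBase (insert e (T \ {f})) ∧ M.IsBase (insert f (B \ {e})) := by
  have he : e ∈ M.E := hB.subset_ground heB
  have hC := hT.fundCircuit_isCircuit he heT
  have hK := hB.compl_closure_sdiff_singleton_isCocircuit heB
  have heK : e ∈ M.E \ M.closure (B \ {e}) := ⟨he, hB.indep.notMem_closure_sdiff_of_mem heB⟩
  obtain ⟨f, ⟨hfC, hfE, hfcl⟩, hfe⟩ :=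
    (hC.isCocircuit_inter_nontrivial hK ⟨e, M.mem_fundCircuit e T, heK⟩).exists_ne e
  have hfT : f ∈ T := (mem_insert_iff.1 (M.fundCircuit_subset_insert e T hfC)).resolve_left hfe
  have hfB : f ∉ B := fun hfB =>
    hfcl (M.subset_closure _ (sdiff_subset.trans hB.subset_ground) ⟨hfB, hfe⟩)
  have hTf : M.Indep (insert e T \ {f}) :=
    (hT.indep.mem_fundCircuit_iff (by rwa [hT.closure_eq]) heT).1 hfC
  refine ⟨f, ⟨hfT, hfB⟩, ?_, hB.exchange_base_of_notMem_closure heB hfcl hfE⟩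
  rw [insert_sdiff_singleton_comm (Ne.symm hfe)]
  exact hT.exchange_isBase_of_indep' hfT heT hTf

variable {M : Matroid α} {A : α → Set ℝ} {w : α → ℝ} {T B : Set α} {a b e : α}

lemma setWeight_insert_sdiff (w : α → ℝ) (hT : T.Finite) (ha : a ∉ T) (hb : b ∈ T) :
    setWeight w (insert a (T \ {b})) = setWeight w T - w b + w a := by
  have hT' : setWeight w T = w b + setWeight w (T \ {b}) := by
    conv_lhs => rw [← insert_sdiff_self_of_mem hb]
    exact finsum_mem_insert w (fun h => h.2 rfl) hT.sdiff
  rw [setWeight, finsum_mem_insert w (fun h => ha h.1) hT.sdiff, ← setWeight, hT']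
  ring

lemma IsMinBasis.le_of_exchange_s9 [M.RankFinite] (hB : IsMinBasis M w B) (hb : b ∈ B)
    (ha : a ∉ B) (hB' : M.IsBase (insert a (B \ {b}))) : w b ≤ w a := by
  have := hB.2 _ hB'
  rw [setWeight_insert_sdiff w hB.1.finite ha hb] at this
  linarith

lemma IsMinBasis.exchange_s9 [M.RankFinite] (hT : IsMinBasis M w T) (ha : a ∉ T) (hb : b ∈ T)
    (hT' : M.IsBase (insert a (T \ {b}))) (hab : w a ≤ w b) :
    IsMinBasis M w (insert a (T \ {b})) := by
  refine ⟨hT', fun B hB => ?_⟩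
  rw [setWeight_insert_sdiff w hT.1.finite ha hb]
  linarith [hT.2 B hB]

lemma Realization.le_of_sSup_le_sInf (hw : Realization M A w) (hA : IsAreaFun M A)
    (ha : a ∈ M.E) (hb : b ∈ M.E) (hab : sSup (A a) ≤ sInf (A b)) : w a ≤ w b :=
  calc w a ≤ sSup (A a) := le_csSup (hA a ha).2.2 (hw a ha)
    _ ≤ sInf (A b) := hab
    _ ≤ w b := csInf_le (hA b hb).2.1 (hw b hb)

lemma IsUOB.exchange_s9 [M.RankFinite] (hT : IsUOB M A T) (hA : IsAreaFun M A) (ha : a ∉ T)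
    (hb : b ∈ T) (haE : a ∈ M.E) (hT' : M.IsBase (insert a (T \ {b})))
    (hab : sSup (A a) ≤ sInf (A b)) : IsUOB M A (insert a (T \ {b})) := fun w hw =>
  (hT w hw).exchange_s9 ha hb hT'
    (hw.le_of_sSup_le_sInf hA haE ((hT w hw).1.subset_ground hb) hab)

lemma IsAreaFun.exists_realization_lt (hA : IsAreaFun M A) {P Q : Set α} (hP : P.Finite)
    (hQ : Q.Finite) (hPE : P ⊆ M.E) (hQE : Q ⊆ M.E) (hPQ : Disjoint P Q)
    (h : ∀ p ∈ P, ∀ q ∈ Q, sInf (A p) < sSup (A q)) :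
    ∃ w, Realization M A w ∧ ∀ p ∈ P, ∀ q ∈ Q, w p < w q := by
  obtain ⟨c, hPc, hcQ⟩ := (hP.image fun p => sInf (A p)).exists_between'
    (hQ.image fun q => sSup (A q)) (by simpa using h)
  have hchoice : ∀ z ∈ M.E, ∃ v ∈ A z, (z ∈ P → v < c) ∧ (z ∈ Q → c < v) := by
    intro z hz
    by_cases hzP : z ∈ P
    · obtain ⟨v, hv, hvc⟩ := exists_lt_of_csInf_lt (hA z hz).1 (hPc _ (mem_image_of_mem _ hzP))
      exact ⟨v, hv, fun _ => hvc, fun hzQ => absurd hzQ (hPQ.notMem_of_mem_left hzP)⟩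
    by_cases hzQ : z ∈ Q
    · obtain ⟨v, hv, hcv⟩ := exists_lt_of_lt_csSup (hA z hz).1 (hcQ _ (mem_image_of_mem _ hzQ))
      exact ⟨v, hv, (absurd · hzP), fun _ => hcv⟩
    obtain ⟨v, hv⟩ := (hA z hz).1
    exact ⟨v, hv, (absurd · hzP), (absurd · hzQ)⟩
  choose! w hwA hwP hwQ using hchoice
  exact ⟨w, hwA, fun p hp q hq => (hwP p (hPE hp) hp).trans (hwQ q (hQE hq) hq)⟩

lemma IsUOB.isBase (hT : IsUOB M A T) (hA : IsAreaFun M A) : M.IsBase T := by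
  obtain ⟨w, hw, -⟩ := hA.exists_realization_lt finite_empty finite_empty (empty_subset _)
    (empty_subset _) (disjoint_empty _) (by simp)
  exact (hT w hw).1

lemma Blue.exists_exchange [M.RankFinite] (hblue : Blue M A e) (hA : IsAreaFun M A)
    (hT : M.IsBase T) (he : e ∈ M.E) (heT : e ∉ T) :
    ∃ f ∈ T, M.IsBase (insert e (T \ {f})) ∧ sSup (A e) ≤ sInf (A f) := by
  by_contra! h
  obtain ⟨w, hw, hlt⟩ := hA.exists_realization_lt
    (P := {f ∈ T | M.IsBase (insert e (T \ {f}))}) (Q := {e})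
    (hT.finite.subset (sep_subset _ _)) (finite_singleton e)
    (fun f hf => hT.subset_ground hf.1) (singleton_subset_iff.2 he)
    (disjoint_singleton_right.2 fun h => heT h.1) (by rintro f hf _ ⟨⟩; exact h f hf.1 hf.2)
  obtain ⟨B, hB, heB⟩ := hblue w hw
  obtain ⟨f, ⟨hfT, hfB⟩, hTf, hBf⟩ := hT.exists_symm_exchange hB.1 heB heT
  exact (hB.le_of_exchange_s9 heB hfB hBf).not_gt (hlt f ⟨hfT, hTf⟩ e rfl)

lemma Red.exists_exchange [M.Finite] (hred : Red M A e) (hA : IsAreaFun M A)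
    (hT : M.IsBase T) (heT : e ∈ T) :
    ∃ f ∈ M.E \ T, M.IsBase (insert f (T \ {e})) ∧ sSup (A f) ≤ sInf (A e) := by
  by_contra! h
  obtain ⟨w, hw, hlt⟩ := hA.exists_realization_lt (P := {e})
    (Q := {f ∈ M.E \ T | M.IsBase (insert f (T \ {e}))}) (finite_singleton e)
    (M.ground_finite.subset fun f hf => hf.1.1) (singleton_subset_iff.2 (hT.subset_ground heT))
    (fun f hf => hf.1.1) (disjoint_singleton_left.2 fun h => h.1.2 heT)
    (by rintro _ ⟨⟩ f hf; exact h f hf.1 hf.2)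
  obtain ⟨B, hB, heB⟩ := hred w hw
  obtain ⟨f, ⟨hfB, hfT⟩, hBf, hTf⟩ := hB.1.exists_symm_exchange hT heT heB
  exact (hB.le_of_exchange_s9 hfB heB hBf).not_gt
    (hlt e rfl f ⟨⟨hB.1.subset_ground hfB, hfT⟩, hTf⟩)

/-- If a uniformly optimal basis exists, each blue (resp. red) element is contained in
(resp. avoided by) some uniformly optimal basis. -/
theorem blue_red_mem_uob (M : Matroid α) (A : α → Set ℝ)
    (hE : M.E.Finite) (hA : IsAreaFun M A)
    (hex : ∃ T, IsUOB M A T) (e : α) (he : e ∈ M.E) :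
    (Blue M A e → ∃ T, IsUOB M A T ∧ e ∈ T) ∧
    (Red M A e → ∃ T, IsUOB M A T ∧ e ∉ T) := by
  have : M.Finite := ⟨hE⟩
  obtain ⟨T, hT⟩ := hex
  have hTb := hT.isBase hA
  refine ⟨fun hblue => ?_, fun hred => ?_⟩
  · by_cases heT : e ∈ T
    · exact ⟨T, hT, heT⟩
    obtain ⟨f, hfT, hT', hef⟩ := hblue.exists_exchange hA hTb he heT
    exact ⟨_, hT.exchange_s9 hA heT hfT he hT' hef, mem_insert e _⟩
  · by_cases heT : e ∈ T
    · obtain ⟨f, ⟨hfE, hfT⟩, hT', hfe⟩ := hred.exists_exchange hA hTb heT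
      exact ⟨_, hT.exchange_s9 hA hfT heT hfE hT' hfe, by simp [ne_of_mem_of_not_mem heT hfT]⟩
    · exact ⟨T, hT, heT⟩
end
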